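/- Let n ≥ 1 and Γ = K_{4n} ⊔ 5·K_{3n}. Then M1(Γ) = 4n(4n−1)^2 + 15n(3n−1)^2, M2(Γ) = (4n(4n−1)^3 + 15n(3n−1)^3)/2, and M2(Γ)/|e(Γ)| > M1(Γ)/|v(Γ)|. -/

import Mathlib

open Finset

/-- First Zagreb index: sum of squared degrees. -/
def zagrebM1 (V : Type*) [Fintype V] (G : SimpleGraph V) [DecidableRel G.Adj] : ℕ :=
  ∑ v, G.degree v ^ 2

/-- Second Zagreb index: sum over edges of the product of endpoint degrees. -/
def zagrebM2 (V : Type*) [Fintype V] (G : SimpleGraph V) [DecidableRel G.Adj] : ℕ :=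
  ∑ e ∈ G.edgeFinset,
    Sym2.lift ⟨fun u v => G.degree u * G.degree v, fun u v => mul_comm _ _⟩ e

/-- Disjoint union of complete graphs of sizes `m i`, one for each `i : ι`. -/
def cliqueUnion {ι : Type*} (m : ι → ℕ) : SimpleGraph (Σ i, Fin (m i)) where
  Adj x y := x.1 = y.1 ∧ x ≠ y
  symm := ⟨fun _ _ h => ⟨h.1.symm, h.2.symm⟩⟩
  loopless := ⟨fun _ h => h.2 rfl⟩

instance cliqueUnion.adjDecidable {ι : Type*} [DecidableEq ι] (m : ι → ℕ) :
    DecidableRel (cliqueUnion m).Adj :=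
  fun x y => inferInstanceAs (Decidable (x.1 = y.1 ∧ x ≠ y))

abbrev SzV (n : ℕ) : Type :=
  Σ i : Unit ⊕ Fin 5, Fin (Sum.elim (fun _ : Unit => 4 * n) (fun _ : Fin 5 => 3 * n) i)

abbrev SzG (n : ℕ) : SimpleGraph (SzV n) :=
  cliqueUnion (Sum.elim (fun _ : Unit => 4 * n) (fun _ : Fin 5 => 3 * n))

lemma cliqueUnion_neighborFinset {ι : Type*} [Fintype ι] [DecidableEq ι] (m : ι → ℕ)
    (i : ι) (x : Fin (m i)) :
    (cliqueUnion m).neighborFinset ⟨i, x⟩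
      = ((univ : Finset (Fin (m i))).erase x).image (fun y => (⟨i, y⟩ : Σ j, Fin (m j))) := by
  ext ⟨j, y⟩
  simp only [SimpleGraph.mem_neighborFinset, mem_image, mem_erase, mem_univ, and_true]
  constructor
  · rintro ⟨rfl, hne⟩
    exact ⟨y, fun h => hne (by rw [h]), rfl⟩
  · rintro ⟨a, ha, h⟩
    obtain ⟨rfl, h2⟩ := Sigma.mk.inj_iff.mp h
    refine ⟨rfl, fun hc => ha ?_⟩
    obtain ⟨-, h3⟩ := Sigma.mk.inj_iff.mp hc
    exact (eq_of_heq h2).trans (eq_of_heq h3).symm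

lemma cliqueUnion_degree {ι : Type*} [Fintype ι] [DecidableEq ι] (m : ι → ℕ)
    (v : Σ i, Fin (m i)) :
    (cliqueUnion m).degree v = m v.1 - 1 := by
  obtain ⟨i, x⟩ := v
  rw [SimpleGraph.degree, cliqueUnion_neighborFinset,
    Finset.card_image_of_injective _ sigma_mk_injective,
    Finset.card_erase_of_mem (mem_univ x), card_univ, Fintype.card_fin]

lemma sum_dart_edge {V : Type*} [Fintype V] (G : SimpleGraph V) [DecidableRel G.Adj]
    (f : Sym2 V → ℕ) :
    ∑ d : G.Dart, f d.edge = 2 * ∑ e ∈ G.edgeFinset, f e := by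
  classical
  rw [← Finset.sum_fiberwise_of_maps_to
    (g := SimpleGraph.Dart.edge) (t := G.edgeFinset)
    (fun d _ => by rw [SimpleGraph.mem_edgeFinset]; exact d.edge_mem) (fun d => f d.edge)]
  rw [Finset.mul_sum]
  refine Finset.sum_congr rfl fun e he => ?_
  rw [Finset.sum_congr rfl (fun d hd => by rw [(Finset.mem_filter.mp hd).2]),
    Finset.sum_const, smul_eq_mul]
  congr 1
  simpa using G.dart_edge_fiber_card e (by rwa [← SimpleGraph.mem_edgeFinset])

lemma two_mul_zagrebM2 {ι : Type*} [Fintype ι] [DecidableEq ι] (m : ι → ℕ) :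
    2 * zagrebM2 _ (cliqueUnion m) = ∑ v : Σ i, Fin (m i), (m v.1 - 1) ^ 3 := by
  classical
  rw [zagrebM2, ← sum_dart_edge]
  have h1 : ∀ d : (cliqueUnion m).Dart,
      Sym2.lift ⟨fun u v => (cliqueUnion m).degree u * (cliqueUnion m).degree v,
        fun u v => mul_comm _ _⟩ d.edge = (m d.fst.1 - 1) ^ 2 := by
    intro d
    have hadj := d.adj
    rw [SimpleGraph.Dart.edge, Sym2.lift_mk]
    show (cliqueUnion m).degree d.1.1 * (cliqueUnion m).degree d.1.2 = _
    rw [cliqueUnion_degree, cliqueUnion_degree, ← hadj.1, sq]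
  rw [Finset.sum_congr rfl (fun d _ => h1 d)]
  rw [← Finset.sum_fiberwise_of_maps_to (s := (univ : Finset (cliqueUnion m).Dart))
    (g := fun d => d.fst) (t := univ)
    (fun d _ => mem_univ d.fst) (fun d => (m d.fst.1 - 1) ^ 2)]
  refine Finset.sum_congr rfl fun v _ => ?_
  rw [Finset.sum_congr rfl (fun d hd => by rw [(Finset.mem_filter.mp hd).2]),
    Finset.sum_const, smul_eq_mul]
  have := (cliqueUnion m).dart_fst_fiber_card_eq_degree v
  rw [show ({d : (cliqueUnion m).Dart | d.fst = v} : Finset _)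
      = univ.filter (fun d => d.fst = v) from rfl] at this
  rw [this, cliqueUnion_degree]; ring

lemma Sz_sum_pow (n k : ℕ) :
    ∑ v : SzV n, (Sum.elim (fun _ : Unit => 4 * n) (fun _ : Fin 5 => 3 * n) v.1 - 1) ^ k
      = 4 * n * (4 * n - 1) ^ k + 5 * (3 * n * (3 * n - 1) ^ k) := by
  rw [← Finset.univ_sigma_univ, Finset.sum_sigma]
  simp [Fintype.sum_sum_type, Finset.sum_const, mul_comm]

theorem zagreb_commuting_quotient_Sz2 (n : ℕ) (hn : 1 ≤ n) :
    (zagrebM1 (SzV n) (SzG n) : ℚ)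
      = 4 * (n : ℚ) * (4 * (n : ℚ) - 1) ^ 2 + 15 * (n : ℚ) * (3 * (n : ℚ) - 1) ^ 2 ∧
    (zagrebM2 (SzV n) (SzG n) : ℚ)
      = (4 * (n : ℚ) * (4 * (n : ℚ) - 1) ^ 3 + 15 * (n : ℚ) * (3 * (n : ℚ) - 1) ^ 3) / 2 ∧
    (zagrebM2 (SzV n) (SzG n) : ℚ) / ((SzG n).edgeFinset.card : ℚ)
      > (zagrebM1 (SzV n) (SzG n) : ℚ) / (Fintype.card (SzV n) : ℚ) := by
  set q : ℚ := (n : ℚ) with hq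
  have hq1 : 1 ≤ q := by rw [hq]; exact_mod_cast hn
  have cA : ((4 * n - 1 : ℕ) : ℚ) = 4 * q - 1 := by
    rw [Nat.cast_sub (by omega)]; push_cast; ring
  have cB : ((3 * n - 1 : ℕ) : ℚ) = 3 * q - 1 := by
    rw [Nat.cast_sub (by omega)]; push_cast; ring
  -- M1
  have hM1 : (zagrebM1 (SzV n) (SzG n) : ℚ)
      = 4 * q * (4 * q - 1) ^ 2 + 15 * q * (3 * q - 1) ^ 2 := by
    have : zagrebM1 (SzV n) (SzG n)
        = 4 * n * (4 * n - 1) ^ 2 + 5 * (3 * n * (3 * n - 1) ^ 2) := by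
      rw [zagrebM1, Finset.sum_congr rfl
        (fun v _ => by rw [cliqueUnion_degree]), Sz_sum_pow]
    rw [this]; push_cast [cA, cB]; ring
  have hM2 : (zagrebM2 (SzV n) (SzG n) : ℚ)
      = (4 * q * (4 * q - 1) ^ 3 + 15 * q * (3 * q - 1) ^ 3) / 2 := by
    have h2 : 2 * zagrebM2 (SzV n) (SzG n)
        = 4 * n * (4 * n - 1) ^ 3 + 5 * (3 * n * (3 * n - 1) ^ 3) := by
      rw [two_mul_zagrebM2, Sz_sum_pow]
    have := congrArg (fun k : ℕ => (k : ℚ)) h2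
    push_cast [cA, cB] at this
    linarith
  have hE : ((SzG n).edgeFinset.card : ℚ) = (4 * q * (4 * q - 1) + 15 * q * (3 * q - 1)) / 2 := by
    have h2 : 2 * (SzG n).edgeFinset.card
        = 4 * n * (4 * n - 1) + 5 * (3 * n * (3 * n - 1)) := by
      rw [← SimpleGraph.sum_degrees_eq_twice_card_edges,
        Finset.sum_congr rfl (fun v _ => by rw [cliqueUnion_degree, ← pow_one (_ - 1)]),
        Sz_sum_pow]
      ring
    have := congrArg (fun k : ℕ => (k : ℚ)) h2
    push_cast [cA, cB] at this
    linarith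
  have hV : ((Fintype.card (SzV n) : ℚ)) = 19 * q := by
    have : Fintype.card (SzV n) = 19 * n := by
      simp [Fintype.card_sigma, Fintype.sum_sum_type]
      ring
    rw [this]; push_cast; ring
  refine ⟨hM1, hM2, ?_⟩
  rw [gt_iff_lt, hM1, hM2, hE, hV, div_lt_div_iff₀ (by nlinarith) (by nlinarith)]
  nlinarith [pow_pos (lt_of_lt_of_le one_pos hq1) 4, sq_nonneg q,
    mul_pos (pow_pos (lt_of_lt_of_le one_pos hq1) 4) (by nlinarith : (0:ℚ) < 7 * q - 2)]
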